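/- arXiv:0909.0241 — 3 statements merged into one kernel-verified Lean document; each statement's English description precedes it below -/
import Mathlib

section
/- Let η = (η^{0'}, η^{1'}) ∈ ℂ^2 be nonzero and ξ = (ξ_0, ξ_1) ∈ ℂ^2. Then the linear system ξ_A = i·X_{AA'} η^{A'} (A ∈ {0,1}) admits a Hermitian 2×2 matrix solution X if and only if ξ_0·conj(η^{0'}) + ξ_1·conj(η^{1'}) + conj(ξ_0)·η^{0'} + conj(ξ_1)·η^{1'} = 0. -/
open Matrix Complex

/-!
If `X` is Hermitian then `η† X η` is real, so `η† ξ = i η† X η` is purely imaginary, which is the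
vanishing of the Hermitian form. Conversely, for `η ≠ 0` and `ζ` with `η† ζ` real, the Hermitian matrix
`(ζ η† + η ζ†) / ‖η‖² - (η† ζ) η η† / ‖η‖⁴` sends `η` to `ζ`; take `ζ = -i ξ`.
-/

namespace Matrix

variable {K n : Type*} [Field K] [StarRing K] [Fintype n]

theorem isSelfAdjoint_star_dotProduct_mulVec {X : Matrix n n K} (hX : X.IsHermitian)
    (v : n → K) : IsSelfAdjoint (star v ⬝ᵥ (X *ᵥ v)) := by
  rw [IsSelfAdjoint, ← star_dotProduct, star_mulVec, hX.eq, dotProduct_mulVec]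

theorem exists_isHermitian_mulVec_eq_iff {v : n → K} (hv : star v ⬝ᵥ v ≠ 0) (w : n → K) :
    (∃ X : Matrix n n K, X.IsHermitian ∧ X *ᵥ v = w) ↔ IsSelfAdjoint (star v ⬝ᵥ w) := by
  refine ⟨fun ⟨X, hX, hXv⟩ => hXv ▸ isSelfAdjoint_star_dotProduct_mulVec hX v, fun hw => ?_⟩
  set c := star v ⬝ᵥ v
  set a := star v ⬝ᵥ w
  have hc : IsSelfAdjoint c := by rw [IsSelfAdjoint, ← star_dotProduct]
  have ha : star w ⬝ᵥ v = a := (star_dotProduct w v).trans hw.star_eq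
  refine ⟨c⁻¹ • (vecMulVec w (star v) + vecMulVec v (star w)) - (a / c ^ 2) • vecMulVec v (star v),
    ?_, ?_⟩
  · simp only [IsHermitian, conjTranspose_sub, conjTranspose_add, conjTranspose_smul,
      conjTranspose_vecMulVec, star_star, hc.inv₀.star_eq, (hw.div (hc.pow 2)).star_eq, add_comm]
  · simp only [sub_mulVec, smul_mulVec, add_mulVec, vecMulVec_mulVec, op_smul_eq_smul, ha]
    match_scalars <;> field_simp <;> ring

end Matrix

theorem Complex.isSelfAdjoint_neg_I_mul_iff (z : ℂ) :
    IsSelfAdjoint (-I * z) ↔ z + starRingEnd ℂ z = 0 := by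
  rw [IsSelfAdjoint, star_mul', star_neg, star_def, conj_I, neg_neg]
  constructor <;> intro h
  · linear_combination (-I) * h + (z + starRingEnd ℂ z) * I_sq
  · linear_combination I * h

/-- For nonzero `η ∈ ℂ²` and `ξ ∈ ℂ²`, the incidence relation
`ξ_A = i · ∑_{A'} X_{AA'} η^{A'}` admits a Hermitian 2×2 matrix solution `X`
if and only if `ξ₀ conj(η⁰) + ξ₁ conj(η¹) + conj(ξ₀) η⁰ + conj(ξ₁) η¹ = 0`. -/
theorem incidence_solvable_iff (ξ η : Fin 2 → ℂ) (hη : η ≠ 0) :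
    (∃ X : Matrix (Fin 2) (Fin 2) ℂ, X.IsHermitian ∧
        ∀ A : Fin 2, ξ A = Complex.I * ∑ A' : Fin 2, X A A' * η A') ↔
      ξ 0 * (starRingEnd ℂ) (η 0) + ξ 1 * (starRingEnd ℂ) (η 1) +
        (starRingEnd ℂ) (ξ 0) * η 0 + (starRingEnd ℂ) (ξ 1) * η 1 = 0 := by
  have incidence_iff_mulVec (X : Matrix (Fin 2) (Fin 2) ℂ) :
      (∀ A, ξ A = I * ∑ A', X A A' * η A') ↔ X *ᵥ η = -I • ξ := by
    simp only [funext_iff, Pi.smul_apply, smul_eq_mul, mulVec, dotProduct]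
    refine forall_congr' fun A => ⟨fun h => ?_, fun h => ?_⟩
    · linear_combination (-I) * h.symm + (∑ A', X A A' * η A') * I_sq
    · linear_combination (-I) * h + ξ A * I_sq
  have hη' : star η ⬝ᵥ η ≠ 0 := by
    open scoped ComplexOrder in exact mt dotProduct_star_self_eq_zero.mp hη
  simp_rw [incidence_iff_mulVec, exists_isHermitian_mulVec_eq_iff hη', dotProduct_smul,
    smul_eq_mul, isSelfAdjoint_neg_I_mul_iff]
  simp only [dotProduct, Fin.sum_univ_two, Pi.star_apply, star_def, map_add, map_mul, conj_conj]
  constructor <;> intro h <;> linear_combination h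
end

section
/- Let (M^3, g_t, U_t) evolve by ∂U/∂t = -f∇^g_U U - (1/2)g^{kl}(∂_t g_{il})u^i ∂_k with ∂g/∂t = -2θ⊙(df|_{TM}) + 2T, where θ = g(U,·) and T(U,U) = 0. Then in the space-time (I × M^3, G = -f^2 dt^2 + g_t) the null vector field L = ∂_t + fU satisfies ∇^G_L U = 0 (U is parallel along the integral curves of L). -/
open Matrix

set_option maxHeartbeats 2000000

/-- Let `(M³, g_t, U_t)` evolve by
`∂U/∂t = -f∇^g_U U - (1/2)g^{kl}(∂_t g_{il})uⁱ∂_k` and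
`∂g/∂t = -2θ⊙(df|_{TM}) + 2T`, with `θ = g(U,·)`, `T` symmetric, `T(U,U) = 0`, and
`U` a unit field.  Then in the space-time `(I × M³, G = -f² dt² + g_t)` (modelled in
coordinates on `ℝ⁴`, coordinate `0` being `t`), the null field `L = ∂_t + fU`
satisfies `∇^G_L U = 0`: `U` is parallel along the integral curves of `L`. -/
theorem U_parallel_along_null_curves
    (f : (Fin 4 → ℝ) → ℝ) (g T : Fin 3 → Fin 3 → (Fin 4 → ℝ) → ℝ)
    (u : Fin 3 → (Fin 4 → ℝ) → ℝ)
    (hf : ContDiff ℝ (⊤ : ℕ∞) f) (hg : ∀ i j, ContDiff ℝ (⊤ : ℕ∞) (g i j))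
    (hu : ∀ i, ContDiff ℝ (⊤ : ℕ∞) (u i))
    (hf0 : ∀ p, f p ≠ 0)
    (hsym : ∀ i j p, g i j p = g j i p)
    (hpd : ∀ p, (Matrix.of fun i j => g i j p).PosDef)
    (hTsym : ∀ i j p, T i j p = T j i p)
    (hTUU : ∀ p, ∑ i : Fin 3, ∑ j : Fin 3, T i j p * u i p * u j p = 0)
    (hunit : ∀ p, ∑ i : Fin 3, ∑ j : Fin 3, g i j p * u i p * u j p = 1) :
    let pd : Fin 4 → ((Fin 4 → ℝ) → ℝ) → (Fin 4 → ℝ) → ℝ :=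
      fun a F p => fderiv ℝ F p (Pi.single a 1)
    let G : (Fin 4 → ℝ) → Matrix (Fin 4) (Fin 4) ℝ := fun p =>
      Matrix.of fun a b =>
        Fin.cases (Fin.cases (-(f p) ^ 2) (fun _ => 0) b)
          (fun i => Fin.cases 0 (fun j => g i j p) b) a
    let Ginv : (Fin 4 → ℝ) → Matrix (Fin 4) (Fin 4) ℝ := fun p => (G p)⁻¹
    let ginv : (Fin 4 → ℝ) → Matrix (Fin 3) (Fin 3) ℝ := fun p =>
      (Matrix.of fun i j => g i j p)⁻¹
    -- Christoffel symbols of the space-time metric G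
    let Γ : Fin 4 → Fin 4 → Fin 4 → (Fin 4 → ℝ) → ℝ := fun c a b p =>
      (1 / 2) * ∑ d : Fin 4, Ginv p c d *
        (pd a (fun q => G q b d) p + pd b (fun q => G q a d) p - pd d (fun q => G q a b) p)
    -- Christoffel symbols of the Riemannian metric g_t
    let Γg : Fin 3 → Fin 3 → Fin 3 → (Fin 4 → ℝ) → ℝ := fun k i j p =>
      (1 / 2) * ∑ l : Fin 3, ginv p k l *
        (pd i.succ (g j l) p + pd j.succ (g i l) p - pd l.succ (g i j) p)
    -- θ = g(U,·)
    let θ : Fin 3 → (Fin 4 → ℝ) → ℝ := fun i p => ∑ k : Fin 3, g i k p * u k p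
    -- U and L = ∂_t + fU as space-time vector fields
    let Uhat : Fin 4 → (Fin 4 → ℝ) → ℝ := fun a =>
      Fin.cases (fun _ => 0) (fun i => u i) a
    let L : Fin 4 → (Fin 4 → ℝ) → ℝ := fun a =>
      Fin.cases (fun _ => 1) (fun i p => f p * u i p) a
    -- evolution equation (i) for U
    (∀ (k : Fin 3) (p : Fin 4 → ℝ),
        pd 0 (u k) p
          = -(f p) * ((∑ i : Fin 3, u i p * pd i.succ (u k) p)
              + ∑ i : Fin 3, ∑ j : Fin 3, u i p * u j p * Γg k i j p)
            - (1 / 2) * ∑ l : Fin 3, ∑ i : Fin 3, ginv p k l * pd 0 (g i l) p * u i p) →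
    -- evolution equation (ii) for g
    (∀ (i j : Fin 3) (p : Fin 4 → ℝ),
        pd 0 (g i j) p
          = -(θ i p * pd j.succ f p + θ j p * pd i.succ f p) + 2 * T i j p) →
    -- conclusion: ∇^G_L U = 0
    ∀ (p : Fin 4 → ℝ) (c : Fin 4),
      (∑ a : Fin 4, L a p * pd a (Uhat c) p)
        + ∑ a : Fin 4, ∑ b : Fin 4, Γ c a b p * L a p * Uhat b p = 0 := by
  intro pd G Ginv ginv Γ Γg θ Uhat L h1 h2 p c
  -- the inverse of G, explicitly
  have hGinv : ∀ q : Fin 4 → ℝ, Ginv q = Matrix.of (fun a b =>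
      Fin.cases (Fin.cases (-(f q) ^ 2)⁻¹ (fun _ => 0) b)
        (fun i => Fin.cases 0 (fun j => ginv q i j) b) a) := by
    intro q
    apply Matrix.inv_eq_right_inv
    have hgmul : (Matrix.of fun i j => g i j q) * ginv q = 1 :=
      Matrix.mul_nonsing_inv _ (isUnit_iff_ne_zero.2 (hpd q).det_pos.ne')
    ext a b
    have hmul : ∀ (i j : Fin 3), (∑ k : Fin 3, g i k q * ginv q k j)
        = (1 : Matrix (Fin 3) (Fin 3) ℝ) i j := by
      intro i j
      have := congrFun (congrFun hgmul i) j
      simpa [Matrix.mul_apply] using this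
    induction a using Fin.cases with
    | zero =>
      induction b using Fin.cases with
      | zero =>
        simp [Matrix.mul_apply, Fin.sum_univ_succ, G, Matrix.one_apply,
          mul_inv_cancel₀, pow_ne_zero, hf0 q]
      | succ j =>
        simp [Matrix.mul_apply, Fin.sum_univ_succ, G, Matrix.one_apply,
          (Fin.succ_ne_zero j).symm]
    | succ i =>
      induction b using Fin.cases with
      | zero =>
        simp [Matrix.mul_apply, Fin.sum_univ_succ, G, Matrix.one_apply,
          Fin.succ_ne_zero i]
      | succ j =>
        have := hmul i j
        simp only [Matrix.mul_apply, Fin.sum_univ_succ, Matrix.of_apply,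
          Fin.cases_zero, Fin.cases_succ, Matrix.one_apply] at this ⊢
        simp only [G, Matrix.of_apply]
        simp only [Fin.cases_zero, Fin.cases_succ]
        simpa [Fin.succ_inj] using this
  have hpd0 : ∀ (a : Fin 4) (q : Fin 4 → ℝ), pd a (fun _ => (0:ℝ)) q = 0 := by
    intro a q; simp [pd]
  have hpdneg : ∀ (a : Fin 4) (q : Fin 4 → ℝ),
      pd a (fun r => -(f r) ^ 2) q = -(2 * f q * pd a f q) := by
    intro a q
    have hd : DifferentiableAt ℝ f q := (hf.differentiable (by simp)).differentiableAt
    have he : (fun r => -(f r) ^ 2) = fun r => -(f r * f r) := by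
      funext r; ring
    simp only [pd, he, fderiv_fun_neg, fderiv_fun_mul hd hd]
    simp; ring
  induction c using Fin.cases with
  | zero =>
    unfold L Uhat Γ
    simp only [hGinv]
    unfold G
    simp only [Fin.sum_univ_four, Fin.sum_univ_three,
      show (1:Fin 4) = Fin.succ 0 from rfl, show (2:Fin 4) = Fin.succ 1 from rfl,
      show (3:Fin 4) = Fin.succ 2 from rfl, Matrix.of_apply,
      Fin.cases_zero, Fin.cases_succ, hpd0, hpdneg, mul_zero, zero_mul,
      add_zero, zero_add, one_mul, mul_one, neg_zero, sub_zero, zero_sub]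
    have h2' := fun i j => h2 i j p
    unfold θ at h2'
    simp only [Fin.sum_univ_three] at h2'
    simp only [h2']
    have hU := hunit p
    have hT := hTUU p
    simp only [Fin.sum_univ_three] at hU hT
    linear_combination
      ((-(f p) ^ 2)⁻¹ * f p *
        (pd (Fin.succ 0) f p * u 0 p + pd (Fin.succ 1) f p * u 1 p +
          pd (Fin.succ 2) f p * u 2 p)) * hU
      - ((-(f p) ^ 2)⁻¹ * f p) * hT
  | succ k =>
    unfold L Uhat Γ
    simp only [hGinv]
    unfold G
    simp only [Fin.sum_univ_four, Fin.sum_univ_three,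
      show (1:Fin 4) = Fin.succ 0 from rfl, show (2:Fin 4) = Fin.succ 1 from rfl,
      show (3:Fin 4) = Fin.succ 2 from rfl, Matrix.of_apply,
      Fin.cases_zero, Fin.cases_succ, hpd0, hpdneg, one_mul, mul_one,
      mul_zero, zero_mul, add_zero, zero_add, neg_zero, sub_zero, zero_sub]
    have h := h1 k p
    unfold Γg at h
    simp only [Fin.sum_univ_three] at h
    linear_combination h
end

section
/- With the same evolution as in the previous statement, the null field L = ∂_t + fU on (I × M^3, G = -f^2 dt^2 + g_t) is geodesic (∇^G_L L = α L for some function α) if and only if the tensor T satisfies T̂(U) = -(1/2)grad_g f + (1/2)U(f)·U, where T̂ is the endomorphism defined by g(T̂(E), F) = T(E,F). -/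
open Matrix

noncomputable section
namespace NFG

abbrev Pt := Fin 4 → ℝ

def pd (a : Fin 4) (F : Pt → ℝ) (p : Pt) : ℝ := fderiv ℝ F p (Pi.single a 1)

lemma pd_const (a : Fin 4) (c : ℝ) (p : Pt) : pd a (fun _ => c) p = 0 := by
  simp [pd]

lemma pd_mul {F H : Pt → ℝ} {p : Pt} (a : Fin 4)
    (hF : DifferentiableAt ℝ F p) (hH : DifferentiableAt ℝ H p) :
    pd a (fun q => F q * H q) p = pd a F p * H p + F p * pd a H p := by
  simp [pd, fderiv_fun_mul hF hH]; ring

lemma pd_neg (F : Pt → ℝ) (a : Fin 4) (p : Pt) :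
    pd a (fun q => -F q) p = -pd a F p := by simp [pd, fderiv_neg]

lemma pd_neg_sq {F : Pt → ℝ} (a : Fin 4) (p : Pt) (hF : DifferentiableAt ℝ F p) :
    pd a (fun q => -(F q)^2) p = -(2 * F p * pd a F p) := by
  have h : (fun q => -(F q)^2) = fun q => -(F q * F q) := by funext q; ring
  rw [h, pd_neg, pd_mul a hF hF]; ring

lemma sum4 (F : Fin 4 → ℝ) : ∑ a : Fin 4, F a = F 0 + ∑ i : Fin 3, F i.succ :=
  Fin.sum_univ_succ F

variable (f : Pt → ℝ) (g T : Fin 3 → Fin 3 → Pt → ℝ) (u : Fin 3 → Pt → ℝ)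

def Gm : Pt → Matrix (Fin 4) (Fin 4) ℝ := fun p =>
  Matrix.of fun a b =>
    Fin.cases (Fin.cases (-(f p) ^ 2) (fun _ => 0) b)
      (fun i => Fin.cases 0 (fun j => g i j p) b) a

def gm : Pt → Matrix (Fin 3) (Fin 3) ℝ := fun p => Matrix.of fun i j => g i j p

def ginv : Pt → Matrix (Fin 3) (Fin 3) ℝ := fun p => (gm g p)⁻¹

def Ginv : Pt → Matrix (Fin 4) (Fin 4) ℝ := fun p => (Gm f g p)⁻¹

def Γ : Fin 4 → Fin 4 → Fin 4 → Pt → ℝ := fun c a b p =>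
  (1 / 2) * ∑ d : Fin 4, Ginv f g p c d *
    (pd a (fun q => Gm f g q b d) p + pd b (fun q => Gm f g q a d) p
      - pd d (fun q => Gm f g q a b) p)

def Γg : Fin 3 → Fin 3 → Fin 3 → Pt → ℝ := fun k i j p =>
  (1 / 2) * ∑ l : Fin 3, ginv g p k l *
    (pd i.succ (g j l) p + pd j.succ (g i l) p - pd l.succ (g i j) p)

def L : Fin 4 → Pt → ℝ := fun a => Fin.cases (fun _ => 1) (fun i p => f p * u i p) a

-- entries of Gm
lemma Gm00 (q : Pt) : Gm f g q 0 0 = -(f q) ^ 2 := rfl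
lemma Gm0s (j : Fin 3) (q : Pt) : Gm f g q 0 j.succ = 0 := by simp [Gm]
lemma Gms0 (i : Fin 3) (q : Pt) : Gm f g q i.succ 0 = 0 := by simp [Gm]
lemma Gmss (i j : Fin 3) (q : Pt) : Gm f g q i.succ j.succ = g i j q := by simp [Gm]

lemma pdG00 {p : Pt} (a : Fin 4) (hf : DifferentiableAt ℝ f p) :
    pd a (fun q => Gm f g q 0 0) p = -(2 * f p * pd a f p) := by
  have h : (fun q => Gm f g q 0 0) = fun q => -(f q)^2 := rfl
  rw [h, pd_neg_sq a p hf]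

lemma pdG0s (a : Fin 4) (j : Fin 3) (p : Pt) :
    pd a (fun q => Gm f g q 0 j.succ) p = 0 := by
  have h : (fun q => Gm f g q 0 j.succ) = fun _ => (0:ℝ) := by
    funext q; simp [Gm]
  rw [h, pd_const]

lemma pdGs0 (a : Fin 4) (i : Fin 3) (p : Pt) :
    pd a (fun q => Gm f g q i.succ 0) p = 0 := by
  have h : (fun q => Gm f g q i.succ 0) = fun _ => (0:ℝ) := by
    funext q; simp [Gm]
  rw [h, pd_const]

lemma pdGss (a : Fin 4) (i j : Fin 3) (p : Pt) :
    pd a (fun q => Gm f g q i.succ j.succ) p = pd a (g i j) p := by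
  have h : (fun q => Gm f g q i.succ j.succ) = g i j := by
    funext q; simp [Gm]
  rw [h]

def Hm : Pt → Matrix (Fin 4) (Fin 4) ℝ := fun p =>
  Matrix.of fun a b =>
    Fin.cases (Fin.cases (-(f p) ^ 2)⁻¹ (fun _ => 0) b)
      (fun i => Fin.cases 0 (fun j => ginv g p i j) b) a

lemma gdet (hpd : ∀ p, (Matrix.of fun i j => g i j p).PosDef) (p : Pt) : IsUnit (gm g p).det :=
  isUnit_iff_ne_zero.2 (ne_of_gt (hpd p).det_pos)

lemma contr (hpd : ∀ p, (Matrix.of fun i j => g i j p).PosDef) (p : Pt) (k m : Fin 3) :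
    ∑ l : Fin 3, ginv g p k l * g l m p = if k = m then 1 else 0 := by
  have h := Matrix.nonsing_inv_mul (gm g p) (gdet g hpd p)
  have h2 := congrFun (congrFun h k) m
  simpa [Matrix.mul_apply, gm, ginv, Matrix.one_apply] using h2

lemma Ginv_eq (hpd : ∀ p, (Matrix.of fun i j => g i j p).PosDef) (hf0 : ∀ p, f p ≠ 0) (p : Pt) : Ginv f g p = Hm f g p := by
  apply Matrix.inv_eq_right_inv
  ext a b
  rw [Matrix.mul_apply, Fin.sum_univ_succ]
  induction a using Fin.cases with
  | zero =>
    induction b using Fin.cases with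
    | zero =>
      have : (-(f p) ^ 2) ≠ 0 := by
        simpa using pow_ne_zero 2 (hf0 p)
      simp [Gm, Hm, Matrix.one_apply, mul_inv_cancel₀ this, mul_inv_cancel₀ (pow_ne_zero 2 (hf0 p))]
    | succ j => simp [Gm, Hm, Matrix.one_apply, (Fin.succ_ne_zero j).symm]
  | succ i =>
    induction b using Fin.cases with
    | zero => simp [Gm, Hm, Matrix.one_apply, Fin.succ_ne_zero i]
    | succ j =>
      have h := Matrix.mul_nonsing_inv (gm g p) (gdet g hpd p)
      have h2 := congrFun (congrFun h i) j
      simp only [Matrix.mul_apply, gm, Matrix.one_apply, Matrix.of_apply] at h2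
      simp only [Gm, Hm, Matrix.of_apply, Fin.cases_succ, Fin.cases_zero,
        Matrix.one_apply, Fin.succ_inj]
      simpa [ginv, gm] using h2

lemma ginv_symm (hsym : ∀ i j p, g i j p = g j i p) (p : Pt) (k l : Fin 3) :
    ginv g p k l = ginv g p l k := by
  have ht : (gm g p)ᵀ = gm g p := by
    ext i j; simp [gm, Matrix.transpose_apply]; exact (hsym i j p).symm
  have h : (ginv g p)ᵀ = ginv g p := by
    rw [ginv, Matrix.transpose_nonsing_inv, ht]
  have := congrFun (congrFun h l) k
  simpa [Matrix.transpose_apply] using this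


-- Γ with upper index 0
lemma Γ0ab (hpd : ∀ p, (Matrix.of fun i j => g i j p).PosDef) (hf0 : ∀ p, f p ≠ 0)
    (a b : Fin 4) (p : Pt) :
    Γ f g 0 a b p = (1/2) * ((-(f p) ^ 2)⁻¹ *
      (pd a (fun q => Gm f g q b 0) p + pd b (fun q => Gm f g q a 0) p
        - pd 0 (fun q => Gm f g q a b) p)) := by
  rw [Γ, sum4]
  simp only [Ginv_eq f g hpd hf0 p, Hm, Matrix.of_apply, Fin.cases_zero, Fin.cases_succ,
    zero_mul, Finset.sum_const_zero, add_zero]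

lemma Γsab (hpd : ∀ p, (Matrix.of fun i j => g i j p).PosDef) (hf0 : ∀ p, f p ≠ 0)
    (k : Fin 3) (a b : Fin 4) (p : Pt) :
    Γ f g k.succ a b p = (1/2) * ∑ l : Fin 3, ginv g p k l *
      (pd a (fun q => Gm f g q b l.succ) p + pd b (fun q => Gm f g q a l.succ) p
        - pd l.succ (fun q => Gm f g q a b) p) := by
  rw [Γ, sum4]
  simp only [Ginv_eq f g hpd hf0 p, Hm, Matrix.of_apply, Fin.cases_zero, Fin.cases_succ,
    zero_mul, zero_add]

lemma Γ000 (hpd : ∀ p, (Matrix.of fun i j => g i j p).PosDef) (hf0 : ∀ p, f p ≠ 0)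
    {p : Pt} (hdf : DifferentiableAt ℝ f p) :
    Γ f g 0 0 0 p = f p * pd 0 f p * ((f p) ^ 2)⁻¹ := by
  rw [Γ0ab f g hpd hf0]
  simp only [pdG00 f g _ hdf]
  rw [inv_neg]; ring

lemma Γ00s (hpd : ∀ p, (Matrix.of fun i j => g i j p).PosDef) (hf0 : ∀ p, f p ≠ 0)
    {p : Pt} (hdf : DifferentiableAt ℝ f p) (j : Fin 3) :
    Γ f g 0 0 j.succ p = f p * pd j.succ f p * ((f p) ^ 2)⁻¹ := by
  rw [Γ0ab f g hpd hf0]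
  simp only [pdG00 f g _ hdf, pdG0s, pdGs0]
  rw [inv_neg]; ring

lemma Γ0s0 (hpd : ∀ p, (Matrix.of fun i j => g i j p).PosDef) (hf0 : ∀ p, f p ≠ 0)
    {p : Pt} (hdf : DifferentiableAt ℝ f p) (i : Fin 3) :
    Γ f g 0 i.succ 0 p = f p * pd i.succ f p * ((f p) ^ 2)⁻¹ := by
  rw [Γ0ab f g hpd hf0]
  simp only [pdG00 f g _ hdf, pdG0s, pdGs0]
  rw [inv_neg]; ring

lemma Γ0ss (hpd : ∀ p, (Matrix.of fun i j => g i j p).PosDef) (hf0 : ∀ p, f p ≠ 0)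
    {p : Pt} (i j : Fin 3) :
    Γ f g 0 i.succ j.succ p = (1/2) * (((f p) ^ 2)⁻¹ * pd 0 (g i j) p) := by
  rw [Γ0ab f g hpd hf0]
  simp only [pdG0s, pdGs0, pdGss]
  rw [inv_neg]; ring

lemma Γs00 (hpd : ∀ p, (Matrix.of fun i j => g i j p).PosDef) (hf0 : ∀ p, f p ≠ 0)
    {p : Pt} (hdf : DifferentiableAt ℝ f p) (k : Fin 3) :
    Γ f g k.succ 0 0 p = ∑ l : Fin 3, ginv g p k l * (f p * pd l.succ f p) := by
  rw [Γsab f g hpd hf0, Finset.mul_sum]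
  refine Finset.sum_congr rfl fun l _ => ?_
  simp only [pdG00 f g _ hdf, pdG0s, pdGs0]
  ring

lemma Γs0s (hpd : ∀ p, (Matrix.of fun i j => g i j p).PosDef) (hf0 : ∀ p, f p ≠ 0)
    {p : Pt} (k j : Fin 3) :
    Γ f g k.succ 0 j.succ p = (1/2) * ∑ l : Fin 3, ginv g p k l * pd 0 (g j l) p := by
  rw [Γsab f g hpd hf0]
  congr 1
  refine Finset.sum_congr rfl fun l _ => ?_
  simp only [pdG0s, pdGs0, pdGss]
  ring

lemma Γss0 (hpd : ∀ p, (Matrix.of fun i j => g i j p).PosDef) (hf0 : ∀ p, f p ≠ 0)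
    {p : Pt} (k i : Fin 3) :
    Γ f g k.succ i.succ 0 p = (1/2) * ∑ l : Fin 3, ginv g p k l * pd 0 (g i l) p := by
  rw [Γsab f g hpd hf0]
  congr 1
  refine Finset.sum_congr rfl fun l _ => ?_
  simp only [pdG0s, pdGs0, pdGss]
  ring

lemma Γsss (hpd : ∀ p, (Matrix.of fun i j => g i j p).PosDef) (hf0 : ∀ p, f p ≠ 0)
    {p : Pt} (k i j : Fin 3) :
    Γ f g k.succ i.succ j.succ p = Γg g k i j p := by
  rw [Γsab f g hpd hf0, Γg]
  simp only [pdGss]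



def Uf : Pt → ℝ := fun p => ∑ i : Fin 3, u i p * pd i.succ f p
def al0 : Pt → ℝ := fun p => f p * pd 0 f p * ((f p) ^ 2)⁻¹ + Uf f u p

lemma dsum (c : ℝ) (X Y : Fin 3 → ℝ) :
    ∑ i : Fin 3, ∑ j : Fin 3, c * (X i * Y j) = c * ((∑ i : Fin 3, X i) * (∑ j : Fin 3, Y j)) := by
  rw [Finset.sum_mul_sum, Finset.mul_sum]
  exact Finset.sum_congr rfl fun i _ => by rw [Finset.mul_sum]

lemma dsum2 (c : ℝ) (F : Fin 3 → Fin 3 → ℝ) :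
    ∑ i : Fin 3, ∑ j : Fin 3, c * F i j = c * ∑ i : Fin 3, ∑ j : Fin 3, F i j := by
  rw [Finset.mul_sum]
  exact Finset.sum_congr rfl fun i _ => by rw [Finset.mul_sum]

lemma stepA (f : Pt → ℝ) (g T : Fin 3 → Fin 3 → Pt → ℝ) (u : Fin 3 → Pt → ℝ)
    (hf : ContDiff ℝ (⊤ : ℕ∞) f) (hg : ∀ i j, ContDiff ℝ (⊤ : ℕ∞) (g i j)) (hu : ∀ i, ContDiff ℝ (⊤ : ℕ∞) (u i))
    (hf0 : ∀ p, f p ≠ 0)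
    (hpd : ∀ p, (Matrix.of fun i j => g i j p).PosDef)
    (hTUU : ∀ p, ∑ i : Fin 3, ∑ j : Fin 3, T i j p * u i p * u j p = 0)
    (hunit : ∀ p, ∑ i : Fin 3, ∑ j : Fin 3, g i j p * u i p * u j p = 1)
    (hgev : ∀ (i j : Fin 3) (p : Pt),
        pd 0 (g i j) p
          = -((∑ x : Fin 3, g i x p * u x p) * pd j.succ f p
              + (∑ x : Fin 3, g j x p * u x p) * pd i.succ f p) + 2 * T i j p)
    (p : Pt) :
    (∑ a : Fin 4, L f u a p * pd a (L f u 0) p)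
      + (∑ a : Fin 4, ∑ b : Fin 4, Γ f g 0 a b p * L f u a p * L f u b p) = al0 f u p := by
  have df : ∀ q, DifferentiableAt ℝ f q := fun q => (hf.differentiable (by simp)).differentiableAt
  simp only [sum4]
  simp only [L, Fin.cases_zero, Fin.cases_succ]
  simp only [pd_const]
  simp only [Γ000 f g hpd hf0 (df p), Γ00s f g hpd hf0 (df p), Γ0s0 f g hpd hf0 (df p),
    Γ0ss f g hpd hf0]
  simp only [hgev]
  simp only [mul_zero, zero_add, mul_one, one_mul, Finset.sum_const_zero, add_zero, zero_mul]
  have hA : f p ^ 2 * (f p ^ 2)⁻¹ = 1 := mul_inv_cancel₀ (pow_ne_zero 2 (hf0 p))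
  have hunit2 : (∑ x : Fin 3, u x p * ∑ k : Fin 3, g x k p * u k p) = 1 := by
    rw [← hunit p]
    exact Finset.sum_congr rfl fun x _ => by
      rw [Finset.mul_sum]; exact Finset.sum_congr rfl fun k _ => by ring
  have e1 : ∑ x : Fin 3, f p * NFG.pd x.succ f p * (f p ^ 2)⁻¹ * (f p * u x p)
      = ∑ x : Fin 3, u x p * NFG.pd x.succ f p :=
    Finset.sum_congr rfl fun x _ => by
      linear_combination (u x p * NFG.pd x.succ f p) * hA
  have e3 : (∑ x : Fin 3, ∑ x1 : Fin 3,
        1 / 2 * ((f p ^ 2)⁻¹ *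
          (-((∑ x2 : Fin 3, g x x2 p * u x2 p) * NFG.pd x1.succ f p
              + (∑ x3 : Fin 3, g x1 x3 p * u x3 p) * NFG.pd x.succ f p) + 2 * T x x1 p))
          * (f p * u x p) * (f p * u x1 p))
      = -(∑ x : Fin 3, u x p * NFG.pd x.succ f p) := by
    calc (∑ x : Fin 3, ∑ x1 : Fin 3,
        1 / 2 * ((f p ^ 2)⁻¹ *
          (-((∑ x2 : Fin 3, g x x2 p * u x2 p) * NFG.pd x1.succ f p
              + (∑ x3 : Fin 3, g x1 x3 p * u x3 p) * NFG.pd x.succ f p) + 2 * T x x1 p))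
          * (f p * u x p) * (f p * u x1 p))
        = ∑ x : Fin 3, ∑ x1 : Fin 3,
            ((-(1/2) * (f p ^ 2 * (f p ^ 2)⁻¹)) *
                ((u x p * ∑ k : Fin 3, g x k p * u k p) * (u x1 p * NFG.pd x1.succ f p))
              + ((-(1/2) * (f p ^ 2 * (f p ^ 2)⁻¹)) *
                ((u x p * NFG.pd x.succ f p) * (u x1 p * ∑ k : Fin 3, g x1 k p * u k p))
              + (f p ^ 2 * (f p ^ 2)⁻¹) * (T x x1 p * u x p * u x1 p))) :=
          Finset.sum_congr rfl fun x _ => Finset.sum_congr rfl fun x1 _ => by ring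
      _ = (∑ x : Fin 3, ∑ x1 : Fin 3, (-(1/2) * (f p ^ 2 * (f p ^ 2)⁻¹)) *
                ((u x p * ∑ k : Fin 3, g x k p * u k p) * (u x1 p * NFG.pd x1.succ f p)))
          + ((∑ x : Fin 3, ∑ x1 : Fin 3, (-(1/2) * (f p ^ 2 * (f p ^ 2)⁻¹)) *
                ((u x p * NFG.pd x.succ f p) * (u x1 p * ∑ k : Fin 3, g x1 k p * u k p)))
          + ∑ x : Fin 3, ∑ x1 : Fin 3, (f p ^ 2 * (f p ^ 2)⁻¹) * (T x x1 p * u x p * u x1 p)) := by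
          simp only [Finset.sum_add_distrib]
      _ = (-(1/2) * (f p ^ 2 * (f p ^ 2)⁻¹)) *
              ((∑ x : Fin 3, u x p * ∑ k : Fin 3, g x k p * u k p) * (∑ x1 : Fin 3, u x1 p * NFG.pd x1.succ f p))
          + ((-(1/2) * (f p ^ 2 * (f p ^ 2)⁻¹)) *
              ((∑ x : Fin 3, u x p * NFG.pd x.succ f p) * (∑ x1 : Fin 3, u x1 p * ∑ k : Fin 3, g x1 k p * u k p))
          + (f p ^ 2 * (f p ^ 2)⁻¹) * ∑ x : Fin 3, ∑ x1 : Fin 3, T x x1 p * u x p * u x1 p) := by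
          rw [dsum, dsum, dsum2]
      _ = -(∑ x : Fin 3, u x p * NFG.pd x.succ f p) := by
          rw [hA, hunit2, hTUU p]; ring
  rw [Finset.sum_add_distrib, e1, e3]
  simp only [al0, Uf]
  ring


lemma stepB (f : Pt → ℝ) (g T : Fin 3 → Fin 3 → Pt → ℝ) (u : Fin 3 → Pt → ℝ)
    (hf : ContDiff ℝ (⊤ : ℕ∞) f) (hg : ∀ i j, ContDiff ℝ (⊤ : ℕ∞) (g i j)) (hu : ∀ i, ContDiff ℝ (⊤ : ℕ∞) (u i))
    (hf0 : ∀ p, f p ≠ 0)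
    (hsym : ∀ i j p, g i j p = g j i p)
    (hpd : ∀ p, (Matrix.of fun i j => g i j p).PosDef)
    (hTsym : ∀ i j p, T i j p = T j i p)
    (hTUU : ∀ p, ∑ i : Fin 3, ∑ j : Fin 3, T i j p * u i p * u j p = 0)
    (hunit : ∀ p, ∑ i : Fin 3, ∑ j : Fin 3, g i j p * u i p * u j p = 1)
    (hU : ∀ (k : Fin 3) (p : Pt),
        pd 0 (u k) p
          = -(f p) * ((∑ i : Fin 3, u i p * pd i.succ (u k) p)
              + ∑ i : Fin 3, ∑ j : Fin 3, u i p * u j p * Γg g k i j p)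
            - (1 / 2) * ∑ l : Fin 3, ∑ i : Fin 3, ginv g p k l * pd 0 (g i l) p * u i p)
    (hgev : ∀ (i j : Fin 3) (p : Pt),
        pd 0 (g i j) p
          = -((∑ x : Fin 3, g i x p * u x p) * pd j.succ f p
              + (∑ x : Fin 3, g j x p * u x p) * pd i.succ f p) + 2 * T i j p)
    (p : Pt) (k : Fin 3) :
    (∑ a : Fin 4, L f u a p * pd a (L f u k.succ) p)
      + (∑ a : Fin 4, ∑ b : Fin 4, Γ f g k.succ a b p * L f u a p * L f u b p)
    = al0 f u p * (f p * u k p)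
      + f p * ((∑ l : Fin 3, ∑ i : Fin 3, ginv g p k l * T l i p * u i p)
          - (-(1/2) * (∑ l : Fin 3, ginv g p k l * pd l.succ f p)
              + (1/2) * (∑ i : Fin 3, u i p * pd i.succ f p) * u k p)) := by
  have df : ∀ q, DifferentiableAt ℝ f q := fun q => (hf.differentiable (by simp)).differentiableAt
  have du : ∀ i q, DifferentiableAt ℝ (u i) q := fun i q => ((hu i).differentiable (by simp)).differentiableAt
  have pm : ∀ (a : Fin 4), pd a (fun q => f q * u k q) p
      = pd a f p * u k p + f p * pd a (u k) p := fun a => pd_mul a (df p) (du k p)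
  simp only [sum4]
  simp only [L, Fin.cases_zero, Fin.cases_succ]
  simp only [pm]
  simp only [hU]
  simp only [Γs00 f g hpd hf0 (df p), Γs0s f g hpd hf0, Γss0 f g hpd hf0, Γsss f g hpd hf0]
  simp only [hgev]
  simp only [mul_zero, zero_add, mul_one, one_mul, Finset.sum_const_zero, add_zero, zero_mul]
  have hA : f p ^ 2 * (f p ^ 2)⁻¹ = 1 := mul_inv_cancel₀ (pow_ne_zero 2 (hf0 p))
  have hunit2 : (∑ b : Fin 3, u b p * ∑ m : Fin 3, g b m p * u m p) = 1 := by
    rw [← hunit p]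
    exact Finset.sum_congr rfl fun x _ => by
      rw [Finset.mul_sum]; exact Finset.sum_congr rfl fun m _ => by ring
  have hθc : (∑ a : Fin 3, ginv g p k a * ∑ m : Fin 3, g a m p * u m p) = u k p := by
    calc (∑ a : Fin 3, ginv g p k a * ∑ m : Fin 3, g a m p * u m p)
        = ∑ a : Fin 3, ∑ m : Fin 3, ginv g p k a * g a m p * u m p :=
          Finset.sum_congr rfl fun a _ => by
            rw [Finset.mul_sum]; exact Finset.sum_congr rfl fun m _ => by ring
      _ = ∑ m : Fin 3, ∑ a : Fin 3, ginv g p k a * g a m p * u m p := Finset.sum_comm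
      _ = ∑ m : Fin 3, (∑ a : Fin 3, ginv g p k a * g a m p) * u m p :=
          Finset.sum_congr rfl fun m _ => by rw [Finset.sum_mul]
      _ = ∑ m : Fin 3, (if k = m then (1:ℝ) else 0) * u m p := by
          simp only [contr g hpd p]
      _ = u k p := by simp
  -- the canonical contracted quantity S
  have c1 : (∑ x : Fin 3, ∑ x1 : Fin 3, ginv g p k x *
        (-((∑ x2 : Fin 3, g x1 x2 p * u x2 p) * pd x.succ f p
            + (∑ x3 : Fin 3, g x x3 p * u x3 p) * pd x1.succ f p) + 2 * T x1 x p) * u x1 p)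
      = -(∑ l : Fin 3, ginv g p k l * pd l.succ f p)
        - u k p * (∑ i : Fin 3, u i p * pd i.succ f p)
        + 2 * (∑ l : Fin 3, ∑ i : Fin 3, ginv g p k l * T l i p * u i p) := by
    calc (∑ x : Fin 3, ∑ x1 : Fin 3, ginv g p k x *
        (-((∑ x2 : Fin 3, g x1 x2 p * u x2 p) * pd x.succ f p
            + (∑ x3 : Fin 3, g x x3 p * u x3 p) * pd x1.succ f p) + 2 * T x1 x p) * u x1 p)
        = ∑ a : Fin 3, ∑ b : Fin 3,
            ((-1 : ℝ) * ((ginv g p k a * pd a.succ f p) * (u b p * ∑ m : Fin 3, g b m p * u m p))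
              + ((-1 : ℝ) * ((ginv g p k a * ∑ m : Fin 3, g a m p * u m p) * (u b p * pd b.succ f p))
                + 2 * (ginv g p k a * T a b p * u b p))) :=
          Finset.sum_congr rfl fun a _ => Finset.sum_congr rfl fun b _ => by
            rw [hTsym b a p]; ring
      _ = (∑ a : Fin 3, ∑ b : Fin 3,
            (-1 : ℝ) * ((ginv g p k a * pd a.succ f p) * (u b p * ∑ m : Fin 3, g b m p * u m p)))
          + ((∑ a : Fin 3, ∑ b : Fin 3,
            (-1 : ℝ) * ((ginv g p k a * ∑ m : Fin 3, g a m p * u m p) * (u b p * pd b.succ f p)))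
          + ∑ a : Fin 3, ∑ b : Fin 3, 2 * (ginv g p k a * T a b p * u b p)) := by
          simp only [Finset.sum_add_distrib]
      _ = (-1 : ℝ) * ((∑ a : Fin 3, ginv g p k a * pd a.succ f p)
              * (∑ b : Fin 3, u b p * ∑ m : Fin 3, g b m p * u m p))
          + ((-1 : ℝ) * ((∑ a : Fin 3, ginv g p k a * ∑ m : Fin 3, g a m p * u m p)
              * (∑ b : Fin 3, u b p * pd b.succ f p))
          + 2 * ∑ a : Fin 3, ∑ b : Fin 3, ginv g p k a * T a b p * u b p) := by
          rw [dsum, dsum, dsum2]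
      _ = _ := by rw [hunit2, hθc]; ring
  have e0 : (∑ x : Fin 3, f p * u x p * (pd x.succ f p * u k p + f p * pd x.succ (u k) p))
      = (f p * u k p) * (∑ i : Fin 3, u i p * pd i.succ f p)
        + f p ^ 2 * (∑ i : Fin 3, u i p * pd i.succ (u k) p) := by
    rw [Finset.mul_sum, Finset.mul_sum, ← Finset.sum_add_distrib]
    exact Finset.sum_congr rfl fun x _ => by ring
  have eΓg : (∑ x : Fin 3, ∑ x1 : Fin 3, Γg g k x x1 p * (f p * u x p) * (f p * u x1 p))
      = f p ^ 2 * (∑ i : Fin 3, ∑ j : Fin 3, u i p * u j p * Γg g k i j p) := by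
    rw [Finset.mul_sum]
    refine Finset.sum_congr rfl fun x _ => ?_
    rw [Finset.mul_sum]
    exact Finset.sum_congr rfl fun x1 _ => by ring
  have eGF : (∑ l : Fin 3, ginv g p k l * (f p * pd l.succ f p))
      = f p * (∑ l : Fin 3, ginv g p k l * pd l.succ f p) := by
    rw [Finset.mul_sum]
    exact Finset.sum_congr rfl fun l _ => by ring
  have eD2 : (∑ x : Fin 3,
        (1 / 2 * ∑ x1 : Fin 3, ginv g p k x1 *
          (-((∑ x2 : Fin 3, g x x2 p * u x2 p) * pd x1.succ f p
              + (∑ x3 : Fin 3, g x1 x3 p * u x3 p) * pd x.succ f p) + 2 * T x x1 p))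
          * (f p * u x p))
      = f p / 2 * (∑ x : Fin 3, ∑ x1 : Fin 3, ginv g p k x *
          (-((∑ x2 : Fin 3, g x1 x2 p * u x2 p) * pd x.succ f p
              + (∑ x3 : Fin 3, g x x3 p * u x3 p) * pd x1.succ f p) + 2 * T x1 x p) * u x1 p) := by
    calc (∑ x : Fin 3,
        (1 / 2 * ∑ x1 : Fin 3, ginv g p k x1 *
          (-((∑ x2 : Fin 3, g x x2 p * u x2 p) * pd x1.succ f p
              + (∑ x3 : Fin 3, g x1 x3 p * u x3 p) * pd x.succ f p) + 2 * T x x1 p))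
          * (f p * u x p))
        = ∑ x : Fin 3, ∑ x1 : Fin 3, f p / 2 *
            (ginv g p k x1 *
              (-((∑ x2 : Fin 3, g x x2 p * u x2 p) * pd x1.succ f p
                  + (∑ x3 : Fin 3, g x1 x3 p * u x3 p) * pd x.succ f p) + 2 * T x x1 p) * u x p) := by
          refine Finset.sum_congr rfl fun x _ => ?_
          rw [Finset.mul_sum, Finset.sum_mul]
          exact Finset.sum_congr rfl fun x1 _ => by ring
      _ = ∑ x1 : Fin 3, ∑ x : Fin 3, f p / 2 *
            (ginv g p k x1 *
              (-((∑ x2 : Fin 3, g x x2 p * u x2 p) * pd x1.succ f p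
                  + (∑ x3 : Fin 3, g x1 x3 p * u x3 p) * pd x.succ f p) + 2 * T x x1 p) * u x p) :=
          Finset.sum_comm
      _ = _ := by rw [dsum2]
  simp only [Finset.sum_add_distrib]
  rw [e0, eΓg, eGF, eD2, c1]
  simp only [al0, Uf]
  linear_combination (-(pd 0 f p * u k p)) * hA



theorem main (f : Pt → ℝ) (g T : Fin 3 → Fin 3 → Pt → ℝ) (u : Fin 3 → Pt → ℝ)
    (hf : ContDiff ℝ (⊤ : ℕ∞) f) (hg : ∀ i j, ContDiff ℝ (⊤ : ℕ∞) (g i j)) (hu : ∀ i, ContDiff ℝ (⊤ : ℕ∞) (u i))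
    (hf0 : ∀ p, f p ≠ 0)
    (hsym : ∀ i j p, g i j p = g j i p)
    (hpd : ∀ p, (Matrix.of fun i j => g i j p).PosDef)
    (hTsym : ∀ i j p, T i j p = T j i p)
    (hTUU : ∀ p, ∑ i : Fin 3, ∑ j : Fin 3, T i j p * u i p * u j p = 0)
    (hunit : ∀ p, ∑ i : Fin 3, ∑ j : Fin 3, g i j p * u i p * u j p = 1)
    (hU : ∀ (k : Fin 3) (p : Pt),
        pd 0 (u k) p
          = -(f p) * ((∑ i : Fin 3, u i p * pd i.succ (u k) p)
              + ∑ i : Fin 3, ∑ j : Fin 3, u i p * u j p * Γg g k i j p)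
            - (1 / 2) * ∑ l : Fin 3, ∑ i : Fin 3, ginv g p k l * pd 0 (g i l) p * u i p)
    (hgev : ∀ (i j : Fin 3) (p : Pt),
        pd 0 (g i j) p
          = -((∑ x : Fin 3, g i x p * u x p) * pd j.succ f p
              + (∑ x : Fin 3, g j x p * u x p) * pd i.succ f p) + 2 * T i j p) :
    ((∃ α : Pt → ℝ, ∀ (p : Pt) (c : Fin 4),
        (∑ a : Fin 4, L f u a p * pd a (L f u c) p)
          + (∑ a : Fin 4, ∑ b : Fin 4, Γ f g c a b p * L f u a p * L f u b p) = α p * L f u c p)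
      ↔ (∀ (p : Pt) (k : Fin 3),
          (∑ l : Fin 3, ∑ i : Fin 3, ginv g p k l * T l i p * u i p)
            = -(1 / 2) * (∑ l : Fin 3, ginv g p k l * pd l.succ f p)
              + (1 / 2) * (∑ i : Fin 3, u i p * pd i.succ f p) * u k p)) := by
  have hL0p : ∀ p : Pt, L f u 0 p = 1 := fun p => by simp [L]
  have hLkp : ∀ (k : Fin 3) (p : Pt), L f u k.succ p = f p * u k p := fun k p => by simp [L]
  constructor
  · rintro ⟨α, hα⟩ p k
    have h0 := hα p 0
    rw [stepA f g T u hf hg hu hf0 hpd hTUU hunit hgev p, hL0p, mul_one] at h0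
    have hk := hα p k.succ
    rw [stepB f g T u hf hg hu hf0 hsym hpd hTsym hTUU hunit hU hgev p k, hLkp, ← h0] at hk
    have h2 : f p * ((∑ l : Fin 3, ∑ i : Fin 3, ginv g p k l * T l i p * u i p)
        - (-(1/2) * (∑ l : Fin 3, ginv g p k l * pd l.succ f p)
            + (1/2) * (∑ i : Fin 3, u i p * pd i.succ f p) * u k p)) = 0 := by linarith
    rcases mul_eq_zero.1 h2 with h | h
    · exact absurd h (hf0 p)
    · exact sub_eq_zero.1 h
  · intro hc
    refine ⟨al0 f u, fun p c => ?_⟩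
    induction c using Fin.cases with
    | zero =>
      rw [stepA f g T u hf hg hu hf0 hpd hTUU hunit hgev p, hL0p, mul_one]
    | succ k =>
      rw [stepB f g T u hf hg hu hf0 hsym hpd hTsym hTUU hunit hU hgev p k, hLkp]
      have h := sub_eq_zero.2 (hc p k)
      rw [h, mul_zero, add_zero]
end NFG

/-- With the same coupled evolution as in the previous statement, the
null field `L = ∂_t + fU` on `(I × M³, G = -f² dt² + g_t)` is geodesic
(`∇^G_L L = α·L` for some function `α`) if and only if the tensor `T` satisfies
`T̂(U) = -(1/2) grad_g f + (1/2) U(f)·U`, where `T̂` is the endomorphism defined by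
`g(T̂(E), F) = T(E,F)`.  (Modelled in coordinates on `ℝ⁴`, coordinate `0` being `t`.) -/
theorem null_field_geodesic_iff
    (f : (Fin 4 → ℝ) → ℝ) (g T : Fin 3 → Fin 3 → (Fin 4 → ℝ) → ℝ)
    (u : Fin 3 → (Fin 4 → ℝ) → ℝ)
    (hf : ContDiff ℝ (⊤ : ℕ∞) f) (hg : ∀ i j, ContDiff ℝ (⊤ : ℕ∞) (g i j))
    (hu : ∀ i, ContDiff ℝ (⊤ : ℕ∞) (u i))
    (hf0 : ∀ p, f p ≠ 0)
    (hsym : ∀ i j p, g i j p = g j i p)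
    (hpd : ∀ p, (Matrix.of fun i j => g i j p).PosDef)
    (hTsym : ∀ i j p, T i j p = T j i p)
    (hTUU : ∀ p, ∑ i : Fin 3, ∑ j : Fin 3, T i j p * u i p * u j p = 0)
    (hunit : ∀ p, ∑ i : Fin 3, ∑ j : Fin 3, g i j p * u i p * u j p = 1) :
    let pd : Fin 4 → ((Fin 4 → ℝ) → ℝ) → (Fin 4 → ℝ) → ℝ :=
      fun a F p => fderiv ℝ F p (Pi.single a 1)
    let G : (Fin 4 → ℝ) → Matrix (Fin 4) (Fin 4) ℝ := fun p =>
      Matrix.of fun a b =>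
        Fin.cases (Fin.cases (-(f p) ^ 2) (fun _ => 0) b)
          (fun i => Fin.cases 0 (fun j => g i j p) b) a
    let Ginv : (Fin 4 → ℝ) → Matrix (Fin 4) (Fin 4) ℝ := fun p => (G p)⁻¹
    let ginv : (Fin 4 → ℝ) → Matrix (Fin 3) (Fin 3) ℝ := fun p =>
      (Matrix.of fun i j => g i j p)⁻¹
    -- Christoffel symbols of the space-time metric G
    let Γ : Fin 4 → Fin 4 → Fin 4 → (Fin 4 → ℝ) → ℝ := fun c a b p =>
      (1 / 2) * ∑ d : Fin 4, Ginv p c d *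
        (pd a (fun q => G q b d) p + pd b (fun q => G q a d) p - pd d (fun q => G q a b) p)
    -- Christoffel symbols of the Riemannian metric g_t
    let Γg : Fin 3 → Fin 3 → Fin 3 → (Fin 4 → ℝ) → ℝ := fun k i j p =>
      (1 / 2) * ∑ l : Fin 3, ginv p k l *
        (pd i.succ (g j l) p + pd j.succ (g i l) p - pd l.succ (g i j) p)
    -- θ = g(U,·)
    let θ : Fin 3 → (Fin 4 → ℝ) → ℝ := fun i p => ∑ k : Fin 3, g i k p * u k p
    -- U and L = ∂_t + fU as space-time vector fields
    let Uhat : Fin 4 → (Fin 4 → ℝ) → ℝ := fun a =>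
      Fin.cases (fun _ => 0) (fun i => u i) a
    let L : Fin 4 → (Fin 4 → ℝ) → ℝ := fun a =>
      Fin.cases (fun _ => 1) (fun i p => f p * u i p) a
    -- evolution equation (i) for U
    (∀ (k : Fin 3) (p : Fin 4 → ℝ),
        pd 0 (u k) p
          = -(f p) * ((∑ i : Fin 3, u i p * pd i.succ (u k) p)
              + ∑ i : Fin 3, ∑ j : Fin 3, u i p * u j p * Γg k i j p)
            - (1 / 2) * ∑ l : Fin 3, ∑ i : Fin 3, ginv p k l * pd 0 (g i l) p * u i p) →
    -- evolution equation (ii) for g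
    (∀ (i j : Fin 3) (p : Fin 4 → ℝ),
        pd 0 (g i j) p
          = -(θ i p * pd j.succ f p + θ j p * pd i.succ f p) + 2 * T i j p) →
    -- conclusion: L is geodesic iff T̂(U) = -(1/2) grad_g f + (1/2) U(f) U
    ((∃ α : (Fin 4 → ℝ) → ℝ, ∀ (p : Fin 4 → ℝ) (c : Fin 4),
        (∑ a : Fin 4, L a p * pd a (L c) p)
          + (∑ a : Fin 4, ∑ b : Fin 4, Γ c a b p * L a p * L b p) = α p * L c p)
      ↔ (∀ (p : Fin 4 → ℝ) (k : Fin 3),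
          (∑ l : Fin 3, ∑ i : Fin 3, ginv p k l * T l i p * u i p)
            = -(1 / 2) * (∑ l : Fin 3, ginv p k l * pd l.succ f p)
              + (1 / 2) * (∑ i : Fin 3, u i p * pd i.succ f p) * u k p)) := by
  intro pd G Ginv ginv Γ Γg θ Uhat L hU hgev
  exact NFG.main f g T u hf hg hu hf0 hsym hpd hTsym hTUU hunit hU hgev
end
end
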